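/- Let g ∈ 𝒮(ℝᵈ) with conj(g) = g. Define, for F on ℝ^{2d}, F*(x, ω) = conj(F(x, −ω)). Then for all F, H ∈ 𝒮(ℝ^{2d}) the Gabor product satisfies (F ♮_g H)* = H* ♮_g F*. -/

import Mathlib

open MeasureTheory Complex

noncomputable section

abbrev Rd (d : ℕ) := EuclideanSpace ℝ (Fin d)

/-- Fourier transform `f^(ω) = ∫ f(x) e^{-2πi x·ω} dx`. -/
def FT {d : ℕ} (f : Rd d → ℂ) (ω : Rd d) : ℂ :=
  ∫ x, f x * Complex.exp ((-2 * Real.pi * Complex.I) * ((inner ℝ x ω : ℝ) : ℂ))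

/-- The Gabor product `(F ♮_g H)(x,ω)`. -/
def gabor {d : ℕ} (g : Rd d → ℂ) (F H : Rd d × Rd d → ℂ) (x ω : Rd d) : ℂ :=
  ∫ xp, ∫ ωp, ∫ ωpp, (starRingEnd ℂ) (FT g (ωp + ωpp - ω)) * F (xp, ωp) * H (xp, ωpp) *
    Complex.exp ((2 * Real.pi * Complex.I) * ((inner ℝ x (ωp + ωpp - ω) : ℝ) : ℂ))

open FourierTransform ComplexConjugate

/-!
Since `g` is real, `conj (ĝ (-s)) = ĝ s`, so the kernel `k s = conj (ĝ s) e^{2πi x·s}` of the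
Gabor product satisfies `conj (k s) = k (-s)`. Conjugating the integral for `(F ♮_g H)(x, -ω)`,
and substituting `ω′ ↦ -ω′`, `ω″ ↦ -ω″` in the one for `(H* ♮_g F*)(x, ω)`, gives the same
integrand with the two frequency variables exchanged. Fubini applies because for fixed `x′` the
integrand is a bounded continuous kernel times a product of two integrable slices.
-/

lemma SchwartzMap.integrable_prodMk_left {D E F : Type*} [NormedAddCommGroup D] [NormedSpace ℝ D]
    [NormedAddCommGroup E] [NormedSpace ℝ E] [MeasurableSpace E] [BorelSpace E]
    [SecondCountableTopology E] [NormedAddCommGroup F] [NormedSpace ℝ F]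
    {μ : Measure E} [μ.HasTemperateGrowth] (f : SchwartzMap (D × E) F) (x : D) :
    Integrable (fun y => f (x, y)) μ := by
  have hgrowth : Function.HasTemperateGrowth fun y : E => (x, y) := by
    have hsplit : (fun y : E => (x, y)) =
        (fun _ : E => ((x, 0) : D × E)) + ⇑(ContinuousLinearMap.inr ℝ D E) := by
      ext y <;> simp
    rw [hsplit]
    exact (Function.HasTemperateGrowth.const _).add
      (ContinuousLinearMap.inr ℝ D E).hasTemperateGrowth
  have hanti : AntilipschitzWith 1 fun y : E => (x, y) :=
    AntilipschitzWith.of_le_mul_dist fun y y' => by simp [Prod.dist_eq]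
  exact (SchwartzMap.compCLMOfAntilipschitz ℝ hgrowth hanti f).integrable

lemma MeasureTheory.Integrable.conj {α : Type*} [MeasurableSpace α] {μ : Measure α} {f : α → ℂ}
    (hf : Integrable f μ) : Integrable (fun a => conj (f a)) μ :=
  Complex.conjCLE.toContinuousLinearMap.integrable_comp hf

variable {d : ℕ}

lemma FT_eq_fourier (f : Rd d → ℂ) : FT f = 𝓕 f := by
  funext w
  rw [Real.fourier_eq']
  refine integral_congr_ae (ae_of_all _ fun v => ?_)
  dsimp only
  rw [smul_eq_mul, mul_comm]
  congr 2
  push_cast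
  ring

lemma continuous_FT {f : Rd d → ℂ} (hf : Integrable f) : Continuous (FT f) := by
  rw [FT_eq_fourier]
  exact VectorFourier.fourierIntegral_continuous Real.continuous_fourierChar
    continuous_inner hf

lemma norm_FT_le (f : Rd d → ℂ) (ω : Rd d) : ‖FT f ω‖ ≤ ∫ x, ‖f x‖ := by
  rw [FT_eq_fourier]
  exact VectorFourier.norm_fourierIntegral_le_integral_norm _ _ _ _ _

lemma conj_FT_neg {f : Rd d → ℂ} (hf : ∀ t, conj (f t) = f t) (ω : Rd d) :
    conj (FT f (-ω)) = FT f ω := by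
  rw [FT, ← integral_conj]
  refine integral_congr_ae (ae_of_all _ fun t => ?_)
  dsimp only
  rw [map_mul, hf, ← Complex.exp_conj, inner_neg_right]
  congr 2
  simp only [map_mul, map_neg, map_ofNat, Complex.conj_ofReal, Complex.conj_I]
  push_cast
  ring

def gaborKernel (g : Rd d → ℂ) (x s : Rd d) : ℂ :=
  conj (FT g s) * Complex.exp ((2 * Real.pi * Complex.I) * ((inner ℝ x s : ℝ) : ℂ))

lemma gabor_eq_integral_gaborKernel (g : Rd d → ℂ) (F H : Rd d × Rd d → ℂ) (x ω : Rd d) :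
    gabor g F H x ω =
      ∫ xp, ∫ a, ∫ b, gaborKernel g x (a + b - ω) * (F (xp, a) * H (xp, b)) := by
  unfold gabor gaborKernel
  congr! 6
  ring

lemma conj_gaborKernel {g : Rd d → ℂ} (hg : ∀ t, conj (g t) = g t) (x s : Rd d) :
    conj (gaborKernel g x s) = gaborKernel g x (-s) := by
  rw [gaborKernel, gaborKernel, map_mul, Complex.conj_conj, ← conj_FT_neg hg s,
    ← Complex.exp_conj, inner_neg_right]
  congr 2
  simp only [map_mul, map_ofNat, Complex.conj_ofReal, Complex.conj_I]
  push_cast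
  ring

lemma norm_gaborKernel_le (g : Rd d → ℂ) (x s : Rd d) :
    ‖gaborKernel g x s‖ ≤ ∫ t, ‖g t‖ := by
  simpa [gaborKernel, Complex.norm_exp] using norm_FT_le g s

lemma continuous_gaborKernel {g : Rd d → ℂ} (hg : Integrable g) (x : Rd d) :
    Continuous (gaborKernel g x) := by
  have := continuous_FT hg
  unfold gaborKernel
  fun_prop

lemma integrable_gaborKernel_comp_mul_prod {g : Rd d → ℂ} (hg : Integrable g) (x : Rd d)
    {L : Rd d × Rd d → Rd d} (hL : Continuous L) {f₁ f₂ : Rd d → ℂ}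
    (hf₁ : Integrable f₁) (hf₂ : Integrable f₂) :
    Integrable (fun p => gaborKernel g x (L p) * (f₁ p.1 * f₂ p.2)) (volume.prod volume) :=
  (hf₁.mul_prod hf₂).bdd_mul ((continuous_gaborKernel hg x).comp hL).aestronglyMeasurable
    (ae_of_all _ fun p => norm_gaborKernel_le g x (L p))

theorem gabor_involution {d : ℕ} (g : SchwartzMap (Rd d) ℂ)
    (hreal : ∀ t, (starRingEnd ℂ) (g t) = g t)
    (F H : SchwartzMap (Rd d × Rd d) ℂ) :
    ∀ x ω : Rd d,
      (starRingEnd ℂ) (gabor (⇑g) (⇑F) (⇑H) x (-ω)) =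
        gabor (⇑g) (fun p => (starRingEnd ℂ) (H (p.1, -p.2)))
          (fun p => (starRingEnd ℂ) (F (p.1, -p.2))) x ω := by
  intro x ω
  rw [gabor_eq_integral_gaborKernel, gabor_eq_integral_gaborKernel, ← integral_conj]
  refine integral_congr_ae (ae_of_all _ fun xp => ?_)
  dsimp only
  set Φ : Rd d → Rd d → ℂ := fun a b =>
    gaborKernel g x (-(a + b + ω)) * (conj (F (xp, a)) * conj (H (xp, b))) with hΦ
  have hconj : conj (∫ a, ∫ b, gaborKernel g x (a + b - -ω) * (F (xp, a) * H (xp, b))) =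
      ∫ a, ∫ b, Φ a b := by
    simp only [← integral_conj, map_mul, conj_gaborKernel hreal, sub_neg_eq_add, hΦ]
  have hneg : ∫ a, ∫ b, gaborKernel g x (a + b - ω) *
      (conj (H (xp, -a)) * conj (F (xp, -b))) = ∫ a, ∫ b, Φ b a := by
    rw [← integral_neg_eq_self]
    refine integral_congr_ae (ae_of_all _ fun a => ?_)
    dsimp only
    rw [← integral_neg_eq_self]
    refine integral_congr_ae (ae_of_all _ fun b => ?_)
    simp only [hΦ, neg_neg]
    rw [show -a + -b - ω = -(b + a + ω) by abel, mul_comm (conj (H (xp, a)))]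
  have hshift : Continuous fun p : Rd d × Rd d => -(p.1 + p.2 + ω) := by fun_prop
  have hΦ_int := integrable_gaborKernel_comp_mul_prod g.integrable x hshift
    (F.integrable_prodMk_left xp).conj (H.integrable_prodMk_left xp).conj
  rw [hconj, hneg]
  exact integral_integral_swap hΦ_int
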